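/- arXiv:2505.03278 — 3 statements merged into one kernel-verified Lean document; each statement's English description precedes it below -/
import Mathlib

section
/- For 0 < ρ₋ < ρ₊ and a(r) = (ρ₊ - r)(r - ρ₋)/(ρ₊ + ρ₋ - r), the integral ∫_{ρ₋}^{ρ₊} a'(r)² dr equals (ρ₊ - ρ₋)³/(3ρ₊ρ₋). -/
/-- For `0 < ρ₋ < ρ₊` and `a(r) = (ρ₊ - r)(r - ρ₋)/(ρ₊ + ρ₋ - r)`, the
integral `∫_{ρ₋}^{ρ₊} a'(r)² dr` equals `(ρ₊ - ρ₋)³/(3ρ₊ρ₋)`. -/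
theorem stmt2 (ρm ρp : ℝ) (h0 : 0 < ρm) (h1 : ρm < ρp)
    (a : ℝ → ℝ)
    (ha : ∀ r, a r = (ρp - r) * (r - ρm) / (ρp + ρm - r)) :
    ∫ r in ρm..ρp, (deriv a r) ^ 2 = (ρp - ρm) ^ 3 / (3 * ρp * ρm) := by
  set s : ℝ := ρp + ρm with hs
  set p : ℝ := ρm * ρp with hp
  have hle : ρm ≤ ρp := h1.le
  have huIcc : Set.uIcc ρm ρp = Set.Icc ρm ρp := Set.uIcc_of_le hle
  -- on the interval, s - r ≥ ρm > 0
  have hpos : ∀ r ∈ Set.uIcc ρm ρp, 0 < s - r := by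
    intro r hr
    rw [huIcc] at hr
    have := hr.2
    simp only [hs]
    linarith [h0]
  -- derivative of a
  have key : ∀ r ∈ Set.uIcc ρm ρp, HasDerivAt a (1 - p / (s - r) ^ 2) r := by
    intro r hr
    have hsr : 0 < s - r := hpos r hr
    have hne : s - r ≠ 0 := ne_of_gt hsr
    have h1' : HasDerivAt (fun x : ℝ => s - x) (-1) r := (hasDerivAt_id r).const_sub s
    have h2 : HasDerivAt (fun x : ℝ => p / (s - x)) (p / (s - r) ^ 2) r := by
      have := (hasDerivAt_const r p).div h1' hne
      convert this using 1
      · rfl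
      · rfl
      · rfl
      · field_simp
        ring
    have hb : HasDerivAt (fun x : ℝ => x - p / (s - x)) (1 - p / (s - r) ^ 2) r :=
      (hasDerivAt_id r).sub h2
    have heq : a =ᶠ[nhds r] fun x : ℝ => x - p / (s - x) := by
      have hopen : IsOpen {x : ℝ | x < s} := isOpen_lt continuous_id continuous_const
      have hmem : r ∈ {x : ℝ | x < s} := by simp only [Set.mem_setOf_eq]; linarith
      filter_upwards [hopen.mem_nhds hmem] with x hx
      have hne' : s - x ≠ 0 := ne_of_gt (by simpa using sub_pos.mpr hx)
      rw [ha x]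
      field_simp [hs, hp]
      ring
    exact hb.congr_of_eventuallyEq heq
  -- rewrite the integrand
  have hcongr : ∀ r ∈ Set.uIcc ρm ρp, (deriv a r) ^ 2 = (1 - p / (s - r) ^ 2) ^ 2 := by
    intro r hr
    rw [(key r hr).deriv]
  rw [intervalIntegral.integral_congr hcongr]
  -- antiderivative
  set F : ℝ → ℝ := fun x => x - 2 * p / (s - x) + p ^ 2 / (3 * (s - x) ^ 3) with hF
  have hFd : ∀ r ∈ Set.uIcc ρm ρp, HasDerivAt F ((1 - p / (s - r) ^ 2) ^ 2) r := by
    intro r hr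
    have hsr : 0 < s - r := hpos r hr
    have hne : s - r ≠ 0 := ne_of_gt hsr
    have h1' : HasDerivAt (fun x : ℝ => s - x) (-1) r := (hasDerivAt_id r).const_sub s
    have h3 : HasDerivAt (fun x : ℝ => 2 * p / (s - x)) (2 * p / (s - r) ^ 2) r := by
      have := (hasDerivAt_const r (2 * p)).div h1' hne
      convert this using 1
      · rfl
      · rfl
      · rfl
      · field_simp
        ring
    have hcube : HasDerivAt (fun x : ℝ => 3 * (s - x) ^ 3)
        (3 * ((3 : ℕ) * (s - r) ^ 2 * (-1))) r := (h1'.pow 3).const_mul 3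
    have hne3 : 3 * (s - r) ^ 3 ≠ 0 := by positivity
    have h4 : HasDerivAt (fun x : ℝ => p ^ 2 / (3 * (s - x) ^ 3)) (p ^ 2 / (s - r) ^ 4) r := by
      have := (hasDerivAt_const r (p ^ 2)).div hcube hne3
      convert this using 1
      · rfl
      · rfl
      · rfl
      · field_simp
        ring
    have := ((hasDerivAt_id r).sub h3).add h4
    convert this using 1
    · rfl
    · rfl
    · rfl
    · field_simp
      ring
  have hcont : ContinuousOn (fun r => (1 - p / (s - r) ^ 2) ^ 2) (Set.uIcc ρm ρp) := by
    apply ContinuousOn.pow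
    apply ContinuousOn.sub continuousOn_const
    apply ContinuousOn.div continuousOn_const
    · fun_prop
    · intro r hr
      have := hpos r hr
      positivity
  rw [intervalIntegral.integral_eq_sub_of_hasDerivAt
    (fun r hr => hFd r hr) (hcont.intervalIntegrable)]
  have hne1 : s - ρp ≠ 0 := ne_of_gt (hpos ρp (Set.right_mem_uIcc))
  have hne2 : s - ρm ≠ 0 := ne_of_gt (hpos ρm (Set.left_mem_uIcc))
  simp only [hF, hs, hp]
  have hm : ρm ≠ 0 := ne_of_gt h0
  have hpne : ρp ≠ 0 := ne_of_gt (h0.trans h1)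
  rw [show ρp + ρm - ρp = ρm by ring, show ρp + ρm - ρm = ρp by ring]
  field_simp
  ring
end

section
/- For 0 < ρ₋ < ρ₊ and λ ∈ ℝ, define F_λ(r) = -λ a(r) with a(r) = (ρ₊ - r)(r - ρ₋)/(ρ₊ + ρ₋ - r). Then ∫_{ρ₋}^{ρ₊} [ (d/dr)(a(r)⁻¹ F_λ(r)²) · F_λ'(r) + (1/2) F_λ'(r)² ] dr = (1/2 - λ) λ² · (ρ₊ - ρ₋)³/(3ρ₊ρ₋). In particular for λ = 1/3 this equals (ρ₊ - ρ₋)³/(162 ρ₊ρ₋). -/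
/-- For `0 < ρ₋ < ρ₊` and `λ ∈ ℝ`, with `a(r) = (ρ₊-r)(r-ρ₋)/(ρ₊+ρ₋-r)` and
`F_λ = -λ a`, the functional
`∫_{ρ₋}^{ρ₊} (d/dr)(a⁻¹ F_λ²) F_λ' + (1/2) F_λ'² dr`
equals `(1/2 - λ) λ² (ρ₊-ρ₋)³/(3ρ₊ρ₋)`; in particular for `λ = 1/3` it equals
`(ρ₊-ρ₋)³/(162 ρ₊ρ₋)`. -/
theorem stmt6 (ρm ρp lam : ℝ) (h0 : 0 < ρm) (h1 : ρm < ρp)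
    (a F : ℝ → ℝ)
    (ha : ∀ r, a r = (ρp - r) * (r - ρm) / (ρp + ρm - r))
    (hF : ∀ r, F r = -lam * a r) :
    (∫ r in ρm..ρp,
        deriv (fun r => (a r)⁻¹ * (F r) ^ 2) r * deriv F r
          + (1 / 2) * (deriv F r) ^ 2)
      = (1 / 2 - lam) * lam ^ 2 * (ρp - ρm) ^ 3 / (3 * ρp * ρm) ∧
    (lam = 1 / 3 →
      (∫ r in ρm..ρp,
          deriv (fun r => (a r)⁻¹ * (F r) ^ 2) r * deriv F r
            + (1 / 2) * (deriv F r) ^ 2)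
        = (ρp - ρm) ^ 3 / (162 * ρp * ρm)) := by
  have hle : ρm ≤ ρp := le_of_lt h1
  have hpm : (0:ℝ) < ρp := h0.trans h1
  have hFfun : F = fun r => -lam * a r := funext hF
  have hkey : (fun r => (a r)⁻¹ * (F r) ^ 2) = fun r => lam ^ 2 * a r := by
    funext r
    rw [hF r]
    by_cases h : a r = 0
    · simp [h]
    · field_simp
  have hsne : ∀ r ∈ Set.uIcc ρm ρp, ρp + ρm - r ≠ 0 := by
    intro r hr
    rw [Set.uIcc_of_le hle] at hr
    have : r ≤ ρp := hr.2
    nlinarith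
  have hda : ∀ r, ρp + ρm - r ≠ 0 →
      HasDerivAt a (1 - ρp * ρm / (ρp + ρm - r) ^ 2) r := by
    intro r hr
    have h1' : HasDerivAt (fun x => (ρp - x) * (x - ρm)) (ρp + ρm - 2 * r) r := by
      have := ((hasDerivAt_id r).const_sub ρp).mul ((hasDerivAt_id r).sub_const ρm)
      simp only [id_eq] at this
      refine this.congr_deriv ?_
      ring
    have h2' : HasDerivAt (fun x => ρp + ρm - x) (-1 : ℝ) r := by
      simpa using (hasDerivAt_id r).const_sub (ρp + ρm)
    have hd := h1'.div h2' hr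
    have hfun : a = fun x => (ρp - x) * (x - ρm) / (ρp + ρm - x) := funext ha
    rw [hfun]
    refine hd.congr_deriv ?_
    field_simp
    ring
  set g : ℝ → ℝ := fun r =>
    (1 / 2 - lam) * lam ^ 2 * (1 - ρp * ρm / (ρp + ρm - r) ^ 2) ^ 2 with hg
  have hEq : Set.EqOn (fun r =>
      deriv (fun r => (a r)⁻¹ * (F r) ^ 2) r * deriv F r
        + (1 / 2) * (deriv F r) ^ 2) g (Set.uIcc ρm ρp) := by
    intro r hr
    have hne := hsne r hr
    have hd := hda r hne
    have hd1 : HasDerivAt (fun r => (a r)⁻¹ * (F r) ^ 2)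
        (lam ^ 2 * (1 - ρp * ρm / (ρp + ρm - r) ^ 2)) r := by
      rw [hkey]; exact hd.const_mul _
    have hd2 : HasDerivAt F (-lam * (1 - ρp * ρm / (ρp + ρm - r) ^ 2)) r := by
      rw [hFfun]; exact hd.const_mul _
    simp only [hd1.deriv, hd2.deriv, hg]
    ring
  have hint : ∫ r in ρm..ρp, (deriv (fun r => (a r)⁻¹ * (F r) ^ 2) r * deriv F r
      + (1 / 2) * (deriv F r) ^ 2) = ∫ r in ρm..ρp, g r :=
    intervalIntegral.integral_congr hEq
  set G : ℝ → ℝ := fun r =>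
    (1 / 2 - lam) * lam ^ 2 * (-(ρp + ρm - r) - 2 * (ρp * ρm) * (ρp + ρm - r)⁻¹
      + (ρp * ρm) ^ 2 / 3 * ((ρp + ρm - r) ^ 3)⁻¹) with hG
  have hdG : ∀ r ∈ Set.uIcc ρm ρp, HasDerivAt G (g r) r := by
    intro r hr
    have hne := hsne r hr
    have h2' : HasDerivAt (fun x => ρp + ρm - x) (-1 : ℝ) r := by
      simpa using (hasDerivAt_id r).const_sub (ρp + ρm)
    have hinv := h2'.inv hne
    have hcube := (h2'.pow 3).inv (pow_ne_zero 3 hne)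
    have hd := ((h2'.neg.sub ((hinv.const_mul (2 * (ρp * ρm))))).add
      (hcube.const_mul ((ρp * ρm) ^ 2 / 3))).const_mul ((1 / 2 - lam) * lam ^ 2)
    rw [hG]
    refine hd.congr_deriv ?_
    rw [hg]
    simp only [Pi.pow_apply]
    field_simp
    ring
  have hcont : IntervalIntegrable g MeasureTheory.volume ρm ρp := by
    apply ContinuousOn.intervalIntegrable
    apply ContinuousOn.mul continuousOn_const
    apply ContinuousOn.pow
    apply ContinuousOn.sub continuousOn_const
    apply ContinuousOn.div continuousOn_const
    · fun_prop
    · intro x hx; exact pow_ne_zero 2 (hsne x hx)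
  have hFTC := intervalIntegral.integral_eq_sub_of_hasDerivAt hdG hcont
  have hval : G ρp - G ρm
      = (1 / 2 - lam) * lam ^ 2 * (ρp - ρm) ^ 3 / (3 * ρp * ρm) := by
    simp only [hG]
    have e1 : ρp + ρm - ρp = ρm := by ring
    have e2 : ρp + ρm - ρm = ρp := by ring
    rw [e1, e2]
    field_simp
    ring
  have hmain : (∫ r in ρm..ρp,
      deriv (fun r => (a r)⁻¹ * (F r) ^ 2) r * deriv F r
        + (1 / 2) * (deriv F r) ^ 2)
      = (1 / 2 - lam) * lam ^ 2 * (ρp - ρm) ^ 3 / (3 * ρp * ρm) := by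
    rw [hint, hFTC, hval]
  refine ⟨hmain, fun hlam => ?_⟩
  rw [hmain, hlam]
  have hne1 : ρp ≠ 0 := ne_of_gt hpm
  have hne2 : ρm ≠ 0 := ne_of_gt h0
  field_simp
  ring
end

section
/- Let 0 < ρ₋ < ρ₊, μ ∈ (ρ₋, ρ₊), e ∈ ℝ, and T₊, T₋ ∈ ℝ satisfy ((μ-ρ₋)T₊ + (ρ₊-μ)T₋)/(ρ₊-ρ₋) ≤ e with T₊, T₋ ≥ 0 and e ≥ 0. Define Q_± = e + (ρ_± - μ)(T₊ - T₋)/(ρ₊-ρ₋). Then max{e, T₊, T₋} ≤ max{Q₊, Q₋} ≤ 2·max{e, T₊, T₋}. -/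
/-- Size of `γ`: with `Q_± = e + (ρ_± - μ)(T₊-T₋)/(ρ₊-ρ₋)` and the
convex-combination bound `((μ-ρ₋)T₊ + (ρ₊-μ)T₋)/(ρ₊-ρ₋) ≤ e`, one has
`max{e,T₊,T₋} ≤ max{Q₊,Q₋} ≤ 2 max{e,T₊,T₋}`. -/
theorem stmt18 (ρm ρp μ e Tp Tm : ℝ) (h0 : 0 < ρm) (h1 : ρm < ρp)
    (hμ : μ ∈ Set.Ioo ρm ρp) (hTp : 0 ≤ Tp) (hTm : 0 ≤ Tm) (he : 0 ≤ e)
    (hcc : ((μ - ρm) * Tp + (ρp - μ) * Tm) / (ρp - ρm) ≤ e)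
    (Qp Qm : ℝ)
    (hQp : Qp = e + (ρp - μ) * (Tp - Tm) / (ρp - ρm))
    (hQm : Qm = e + (ρm - μ) * (Tp - Tm) / (ρp - ρm)) :
    max e (max Tp Tm) ≤ max Qp Qm ∧ max Qp Qm ≤ 2 * max e (max Tp Tm) := by
  obtain ⟨hμ1, hμ2⟩ := hμ
  have hd : (0:ℝ) < ρp - ρm := by linarith
  rw [div_le_iff₀ hd] at hcc
  subst hQp hQm
  have hQpTp : Tp ≤ e + (ρp - μ) * (Tp - Tm) / (ρp - ρm) := by
    rw [← sub_nonneg]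
    have heq : e + (ρp - μ) * (Tp - Tm) / (ρp - ρm) - Tp
        = (e * (ρp - ρm) + (ρp - μ) * (Tp - Tm) - Tp * (ρp - ρm)) / (ρp - ρm) := by
      field_simp
    rw [heq]
    apply div_nonneg _ hd.le
    nlinarith [hcc]
  have hQmTm : Tm ≤ e + (ρm - μ) * (Tp - Tm) / (ρp - ρm) := by
    rw [← sub_nonneg]
    have heq : e + (ρm - μ) * (Tp - Tm) / (ρp - ρm) - Tm
        = (e * (ρp - ρm) + (ρm - μ) * (Tp - Tm) - Tm * (ρp - ρm)) / (ρp - ρm) := by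
      field_simp
    rw [heq]
    apply div_nonneg _ hd.le
    nlinarith [hcc]
  have hE : e ≤ max (e + (ρp - μ) * (Tp - Tm) / (ρp - ρm))
      (e + (ρm - μ) * (Tp - Tm) / (ρp - ρm)) := by
    rcases le_or_gt Tm Tp with h | h
    · refine le_trans ?_ (le_max_left _ _)
      have : 0 ≤ (ρp - μ) * (Tp - Tm) / (ρp - ρm) := by
        apply div_nonneg _ hd.le
        nlinarith
      linarith
    · refine le_trans ?_ (le_max_right _ _)
      have : 0 ≤ (ρm - μ) * (Tp - Tm) / (ρp - ρm) := by
        apply div_nonneg _ hd.le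
        nlinarith
      linarith
  constructor
  · exact max_le hE (max_le (le_trans hQpTp (le_max_left _ _))
      (le_trans hQmTm (le_max_right _ _)))
  · have hMp : (ρp - μ) * (Tp - Tm) / (ρp - ρm) ≤ max Tp Tm := by
      rcases le_or_gt Tm Tp with h | h
      · refine le_trans ?_ (le_max_left Tp Tm)
        rw [div_le_iff₀ hd]
        nlinarith
      · refine le_trans ?_ (le_trans hTp (le_max_left Tp Tm))
        apply div_nonpos_of_nonpos_of_nonneg _ hd.le
        nlinarith
    have hMm : (ρm - μ) * (Tp - Tm) / (ρp - ρm) ≤ max Tp Tm := by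
      rcases le_or_gt Tp Tm with h | h
      · refine le_trans ?_ (le_max_right Tp Tm)
        rw [div_le_iff₀ hd]
        nlinarith
      · refine le_trans ?_ (le_trans hTm (le_max_right Tp Tm))
        apply div_nonpos_of_nonpos_of_nonneg _ hd.le
        nlinarith
    have h1' : e ≤ max e (max Tp Tm) := le_max_left _ _
    have h2' : max Tp Tm ≤ max e (max Tp Tm) := le_max_right _ _
    apply max_le <;> linarith
end
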